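/- Let (E^σ_m) ⊆ (F^σ_m) be an elementary injection of families of multifiltrations with parameters (k_0, σ_0, m_0), and let σ ∈ Σ and m ∈ M be such that dim_ℂ F^σ_m = dim_ℂ E^σ_m + 1. Then σ_0 is a face of σ and m ∈ m_0 + σ_0^⊥. Moreover, for any m' ∈ m_0 + σ_0^⊥ with m ≤_σ m', one also has dim_ℂ F^σ_{m'} = dim_ℂ E^σ_{m'} + 1. -/
import Mathlib


open Finset

namespace Toric

/-- Primitive ray generators of the fan of `ℙⁿ`: `u 0 = -(e₁+⋯+eₙ)` and `u (i+1) = e_{i+1}`. -/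
def uGen (n : ℕ) : Fin (n + 1) → Fin n → ℤ :=
  Fin.cons (fun _ => -1) fun k => Pi.single k 1

/-- The duality pairing `⟨m, u_i⟩` for `m ∈ M = ℤⁿ`. -/
def pair (n : ℕ) (m : Fin n → ℤ) (i : Fin (n + 1)) : ℤ :=
  ∑ j, m j * uGen n i j

/-- A cone of the fan of `ℙⁿ`: a proper subset of the set `{0, …, n}` of rays. -/
abbrev Cone (n : ℕ) : Type := {I : Finset (Fin (n + 1)) // I ≠ Finset.univ}

/-- `m ≤_σ m'`, i.e. `m' - m ∈ σ^∨`. -/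
def dualLe (n : ℕ) (σ : Cone n) (m m' : Fin n → ℤ) : Prop :=
  ∀ i ∈ σ.1, 0 ≤ pair n (m' - m) i

/-- `m ∈ σ^⊥`. -/
def inPerp (n : ℕ) (σ : Cone n) (m : Fin n → ℤ) : Prop :=
  ∀ i ∈ σ.1, pair n m i = 0

/-- `m <_σ m'`, i.e. `m ≤_σ m'` and `m' - m ∉ σ^⊥`. -/
def dualLt (n : ℕ) (σ : Cone n) (m m' : Fin n → ℤ) : Prop :=
  dualLe n σ m m' ∧ ¬ inPerp n σ (m' - m)

/-- A family of multifiltrations of the `ℂ`-vector space `V`, indexed by the cones of the fan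
of `ℙⁿ` and the characters `m ∈ M`. -/
structure MultiFilt (n : ℕ) (V : Type) [AddCommGroup V] [Module ℂ V] : Type where
  E : Cone n → (Fin n → ℤ) → Submodule ℂ V
  mono : ∀ σ m m', dualLe n σ m m' → E σ m ≤ E σ m'
  top_of_empty : ∀ σ : Cone n, σ.1 = ∅ → ∀ m, E σ m = ⊤
  chain_bot : ∀ (σ : Cone n) (ms : ℤ → Fin n → ℤ),
    (∀ i : ℤ, dualLt n σ (ms (i - 1)) (ms i)) →
    ∃ i₀ : ℤ, ∀ i ≤ i₀, E σ (ms i) = ⊥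
  finite_support : ∃ S : Finset (Cone n × (Fin n → ℤ)), ∀ (σ : Cone n) (m : Fin n → ℤ),
    ¬ (E σ m : Set V) ⊆ (⋃ m' ∈ {m' | dualLt n σ m' m}, (E σ m' : Set V)) →
    ∃ q ∈ S, q.1 = σ ∧ inPerp n σ (m - q.2)
  facet_union : ∀ σ τ : Cone n, τ.1 ⊆ σ.1 → τ.1.card + 1 = σ.1.card →
    ∀ mτ : Fin n → ℤ, dualLe n σ 0 mτ → inPerp n τ mτ →
    (∀ w : Fin n → ℤ, inPerp n τ w ↔ ∃ (v : Fin n → ℤ) (k : ℤ), inPerp n σ v ∧ w = v + k • mτ) →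
    ∀ m, E τ m = ⨆ i : ℕ, E σ (m + (i : ℤ) • mτ)

/-- A pointwise injection `E ⊆ F` of families of multifiltrations is elementary with
parameters `(k₀, σ₀, m₀)`. -/
structure IsElementary {n : ℕ} {V : Type} [AddCommGroup V] [Module ℂ V]
    (E F : MultiFilt n V) (k₀ : ℕ) (σ₀ : Cone n) (m₀ : Fin n → ℤ) : Prop where
  le : ∀ σ m, E.E σ m ≤ F.E σ m
  dim : σ₀.1.card = k₀
  eq_of_lt : ∀ σ m, σ.1.card < k₀ → E.E σ m = F.E σ m
  ne_iff : ∀ (σ : Cone n) (m : Fin n → ℤ), σ.1.card = k₀ →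
    (E.E σ m ≠ F.E σ m ↔ σ = σ₀ ∧ inPerp n σ₀ (m - m₀))
  rank_step : Module.finrank ℂ (F.E σ₀ m₀) = Module.finrank ℂ (E.E σ₀ m₀) + 1
  eq_of_gt : ∀ σ m, k₀ < σ.1.card → ¬(σ₀.1 ⊂ σ.1 ∧ dualLe n σ₀ m m₀) → E.E σ m = F.E σ m
  inf_of_gt : ∀ σ m, k₀ < σ.1.card → σ₀.1 ⊂ σ.1 → dualLe n σ₀ m m₀ →
    E.E σ m = F.E σ m ⊓ E.E σ₀ m₀


/-! ### Auxiliary lemmas -/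

lemma pair_sub (n : ℕ) (m m' : Fin n → ℤ) (i : Fin (n + 1)) :
    pair n (m - m') i = pair n m i - pair n m' i := by
  simp [pair, sub_mul, Finset.sum_sub_distrib]

lemma pair_add (n : ℕ) (m m' : Fin n → ℤ) (i : Fin (n + 1)) :
    pair n (m + m') i = pair n m i + pair n m' i := by
  simp [pair, add_mul, Finset.sum_add_distrib]

lemma pair_smul (n : ℕ) (k : ℤ) (m : Fin n → ℤ) (i : Fin (n + 1)) :
    pair n (k • m) i = k * pair n m i := by
  simp [pair, Finset.mul_sum, mul_assoc]

/-- Helper vectors `w 0 = 0`, `w (k+1) = e_k^* ∈ M`. -/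
def wvec (n : ℕ) : Fin (n + 1) → Fin n → ℤ :=
  Fin.cons 0 fun k => Pi.single k 1

lemma pair_wvec (n : ℕ) (a b : Fin (n + 1)) :
    pair n (wvec n a) b = (if a = b then 1 else 0) - (if b = 0 then 1 else 0) := by
  unfold pair wvec uGen
  induction a using Fin.cases with
  | zero =>
    induction b using Fin.cases with
    | zero => simp
    | succ b => simp [Fin.succ_ne_zero, (Fin.succ_ne_zero b).symm]
  | succ a =>
    induction b using Fin.cases with
    | zero => simp [Fin.succ_ne_zero]
    | succ b =>
      simp only [Fin.cons_succ, Fin.succ_ne_zero, if_false, sub_zero, Fin.succ_inj]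
      rcases eq_or_ne a b with rfl | hab
      · simp [Pi.single_apply]
      · simp only [Pi.single_apply, ite_mul, one_mul, zero_mul]
        rw [Finset.sum_ite_eq' Finset.univ a fun j => if j = b then (1:ℤ) else 0]
        simp [hab, hab.symm]

/-- The key pairing computation for `mτ = wvec i₀ - wvec ℓ`. -/
lemma pair_mtau (n : ℕ) (i₀ ℓ b : Fin (n + 1)) :
    pair n (wvec n i₀ - wvec n ℓ) b =
      (if i₀ = b then 1 else 0) - (if ℓ = b then 1 else 0) := by
  rw [pair_sub, pair_wvec, pair_wvec]; ring

/-- One facet step of monotonicity along faces. -/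
lemma facet_step {n : ℕ} {V : Type} [AddCommGroup V] [Module ℂ V]
    (G : MultiFilt n V) (σ τ : Cone n) (i₀ : Fin (n + 1)) (hi₀ : i₀ ∈ σ.1)
    (hτ : τ.1 = σ.1.erase i₀) (m : Fin n → ℤ) :
    G.E σ m ≤ G.E τ m := by
  obtain ⟨ℓ, hℓ⟩ : ∃ ℓ, ℓ ∉ σ.1 := by
    by_contra hc
    push_neg at hc
    exact σ.2 (Finset.eq_univ_iff_forall.mpr hc)
  set mτ : Fin n → ℤ := wvec n i₀ - wvec n ℓ with hmτ
  have hℓi₀ : ℓ ≠ i₀ := fun hh => hℓ (hh ▸ hi₀)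
  have hpair : ∀ b, pair n mτ b =
      (if i₀ = b then 1 else 0) - (if ℓ = b then 1 else 0) := pair_mtau n i₀ ℓ
  have hsub : τ.1 ⊆ σ.1 := hτ ▸ Finset.erase_subset _ _
  have hcard : τ.1.card + 1 = σ.1.card := by rw [hτ]; exact Finset.card_erase_add_one hi₀
  have hdual : dualLe n σ 0 mτ := by
    intro b hb
    rw [sub_zero, hpair]
    have : ℓ ≠ b := fun hh => hℓ (hh ▸ hb)
    simp only [this, if_false, sub_zero]
    split <;> norm_num
  have hperp : inPerp n τ mτ := by
    intro b hb
    rw [hτ] at hb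
    have h1 : i₀ ≠ b := fun hh => (Finset.mem_erase.mp hb).1 hh.symm
    have h2 : ℓ ≠ b := fun hh => hℓ (hh ▸ (Finset.mem_erase.mp hb).2)
    rw [hpair]; simp [h1, h2]
  have hlat : ∀ w : Fin n → ℤ, inPerp n τ w ↔
      ∃ (v : Fin n → ℤ) (k : ℤ), inPerp n σ v ∧ w = v + k • mτ := by
    intro w
    constructor
    · intro hw
      refine ⟨w - pair n w i₀ • mτ, pair n w i₀, ?_, by abel⟩
      intro b hb
      rw [pair_sub, pair_smul, hpair]
      have hlb : ℓ ≠ b := fun hh => hℓ (hh ▸ hb)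
      simp only [hlb, if_false, sub_zero]
      rcases eq_or_ne i₀ b with rfl | hne
      · simp
      · have hbτ : b ∈ τ.1 := by
          rw [hτ]; exact Finset.mem_erase.mpr ⟨fun hh => hne hh.symm, hb⟩
        rw [hw b hbτ]
        simp [hne]
    · rintro ⟨v, k, hv, rfl⟩ b hb
      rw [pair_add, pair_smul, hv b (hsub hb), hperp b hb]
      ring
  have hu := G.facet_union σ τ hsub hcard mτ hdual hperp hlat m
  rw [hu]
  have h0 : m + ((0 : ℕ) : ℤ) • mτ = m := by simp
  have := le_iSup (fun i : ℕ => G.E σ (m + (i : ℤ) • mτ)) 0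
  rwa [h0] at this

/-- Monotonicity of a multifiltration along face inclusions. -/
lemma face_mono {n : ℕ} {V : Type} [AddCommGroup V] [Module ℂ V]
    (G : MultiFilt n V) (σ τ : Cone n) (hτσ : τ.1 ⊆ σ.1) (m : Fin n → ℤ) :
    G.E σ m ≤ G.E τ m := by
  obtain ⟨c, hc⟩ : ∃ c, σ.1.card = c := ⟨_, rfl⟩
  induction c using Nat.strong_induction_on generalizing σ with
  | _ c ih =>
  rcases eq_or_ssubset_of_subset hτσ with heq | hss
  · exact le_of_eq (congrArg (fun x => G.E x m) (Subtype.ext heq.symm))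
  · obtain ⟨i₀, hi₀σ, hi₀τ⟩ := Finset.exists_of_ssubset hss
    have hτ'ne : σ.1.erase i₀ ≠ Finset.univ := by
      intro hu
      exact σ.2 (Finset.eq_univ_iff_forall.mpr fun x =>
        Finset.erase_subset i₀ σ.1 (Finset.eq_univ_iff_forall.mp hu x))
    set τ' : Cone n := ⟨σ.1.erase i₀, hτ'ne⟩ with hτ'
    have h1 : G.E σ m ≤ G.E τ' m := facet_step G σ τ' i₀ hi₀σ rfl m
    have h2 : G.E τ' m ≤ G.E τ m := by
      refine ih τ'.1.card ?_ τ' ?_ rfl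
      · rw [← hc]
        rw [show τ'.1.card = σ.1.card - 1 from by
          simp [hτ', Finset.card_erase_of_mem hi₀σ]]
        have : 0 < σ.1.card := Finset.card_pos.mpr ⟨i₀, hi₀σ⟩
        omega
      · exact fun b hb => Finset.mem_erase.mpr ⟨fun hh => hi₀τ (hh ▸ hb), hτσ hb⟩
    exact h1.trans h2

/-- inPerp implies `dualLe` in both directions. -/
lemma dualLe_of_inPerp {n : ℕ} {σ : Cone n} {m m' : Fin n → ℤ}
    (hp : inPerp n σ (m' - m)) : dualLe n σ m m' ∧ dualLe n σ m' m := by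
  constructor
  · intro b hb; rw [hp b hb]
  · intro b hb
    have : pair n (m - m') b = -pair n (m' - m) b := by rw [pair_sub, pair_sub]; ring
    rw [this, hp b hb]; norm_num

lemma inPerp_sub {n : ℕ} {σ : Cone n} {m₀ m m' : Fin n → ℤ}
    (h1 : inPerp n σ (m - m₀)) (h2 : inPerp n σ (m' - m₀)) : inPerp n σ (m' - m) := by
  intro b hb
  have : pair n (m' - m) b = pair n (m' - m₀) b - pair n (m - m₀) b := by
    rw [pair_sub, pair_sub, pair_sub]; ring
  rw [this, h1 b hb, h2 b hb]; ring

/-- Lemma: where a dimension jump happens for an elementary injection. -/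
theorem stmt2 (n : ℕ) (V : Type) [AddCommGroup V] [Module ℂ V] [FiniteDimensional ℂ V]
    (E F : MultiFilt n V) (k₀ : ℕ) (σ₀ : Cone n) (m₀ : Fin n → ℤ)
    (h : IsElementary E F k₀ σ₀ m₀) (σ : Cone n) (m : Fin n → ℤ)
    (hjump : Module.finrank ℂ (F.E σ m) = Module.finrank ℂ (E.E σ m) + 1) :
    σ₀.1 ⊆ σ.1 ∧ inPerp n σ₀ (m - m₀) ∧
    ∀ m' : Fin n → ℤ, inPerp n σ₀ (m' - m₀) → dualLe n σ m m' →
      Module.finrank ℂ (F.E σ m') = Module.finrank ℂ (E.E σ m') + 1 := by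
  have hne : E.E σ m ≠ F.E σ m := by
    intro heq
    rw [heq] at hjump
    omega
  rcases lt_trichotomy σ.1.card k₀ with hlt | heq | hgt
  · exact absurd (h.eq_of_lt σ m hlt) hne
  · -- case dim σ = k₀ : σ = σ₀
    obtain ⟨hσeq, hperp⟩ := (h.ne_iff σ m heq).mp hne
    subst hσeq
    refine ⟨subset_rfl, hperp, ?_⟩
    intro m' hperp' _
    have hpm : inPerp n σ (m' - m) := inPerp_sub hperp hperp'
    obtain ⟨hle1, hle2⟩ := dualLe_of_inPerp hpm
    have hE : E.E σ m' = E.E σ m := le_antisymm (E.mono σ m' m hle2) (E.mono σ m m' hle1)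
    have hF : F.E σ m' = F.E σ m := le_antisymm (F.mono σ m' m hle2) (F.mono σ m m' hle1)
    rw [hE, hF]
    exact hjump
  · -- case dim σ > k₀
    have hcond : σ₀.1 ⊂ σ.1 ∧ dualLe n σ₀ m m₀ := by
      by_contra hc
      exact hne (h.eq_of_gt σ m hgt hc)
    obtain ⟨hss, hmle⟩ := hcond
    have hinf : E.E σ m = F.E σ m ⊓ E.E σ₀ m₀ := h.inf_of_gt σ m hgt hss hmle
    set W : Submodule ℂ V := E.E σ₀ m₀ with hW
    -- first: m - m₀ ∈ σ₀^⊥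
    have hperp : inPerp n σ₀ (m - m₀) := by
      by_contra hnp
      have hEF₀ : E.E σ₀ m = F.E σ₀ m := by
        by_contra hne₀
        exact hnp ((h.ne_iff σ₀ m h.dim).mp hne₀).2
      have hle : F.E σ m ≤ W := by
        calc F.E σ m ≤ F.E σ₀ m := face_mono F σ σ₀ hss.subset m
        _ = E.E σ₀ m := hEF₀.symm
        _ ≤ W := E.mono σ₀ m m₀ hmle
      have : E.E σ m = F.E σ m := by rw [hinf, inf_eq_left.mpr hle]
      exact hne this
    refine ⟨hss.subset, hperp, ?_⟩
    intro m' hperp' hmm'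
    -- dualLe σ₀ m' m₀ from perpendicularity
    have hperp'' : inPerp n σ₀ (m₀ - m') := by
      intro b hb
      have := hperp' b hb
      rw [pair_sub] at this ⊢
      omega
    have hle' : dualLe n σ₀ m' m₀ := (dualLe_of_inPerp hperp'').1
    have hinf' : E.E σ m' = F.E σ m' ⊓ W := h.inf_of_gt σ m' hgt hss hle'
    -- the sup-inf dimension formula
    have hsupinf : ∀ A : Submodule ℂ V,
        Module.finrank ℂ ↥(A ⊔ W) + Module.finrank ℂ ↥(A ⊓ W)
          = Module.finrank ℂ ↥A + Module.finrank ℂ ↥W := fun A =>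
      Submodule.finrank_sup_add_finrank_inf_eq A W
    -- finrank (F σ m ⊔ W) = finrank W + 1
    have h1 : Module.finrank ℂ ↥(F.E σ m ⊔ W) = Module.finrank ℂ ↥W + 1 := by
      have := hsupinf (F.E σ m)
      rw [← hinf] at this
      omega
    -- lower bound at m'
    have hmono1 : F.E σ m ⊔ W ≤ F.E σ m' ⊔ W :=
      sup_le_sup_right (F.mono σ m m' hmm') W
    have hlow : Module.finrank ℂ ↥W + 1 ≤ Module.finrank ℂ ↥(F.E σ m' ⊔ W) := by
      rw [← h1]
      exact Submodule.finrank_mono hmono1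
    -- upper bound at m'
    have hFm'le : F.E σ m' ≤ F.E σ₀ m₀ := by
      have hp2 : inPerp n σ₀ (m₀ - m') := hperp''
      obtain ⟨_, hle2⟩ := dualLe_of_inPerp hp2
      calc F.E σ m' ≤ F.E σ₀ m' := face_mono F σ σ₀ hss.subset m'
      _ ≤ F.E σ₀ m₀ := F.mono σ₀ m' m₀ hle'
    have hWle : W ≤ F.E σ₀ m₀ := h.le σ₀ m₀
    have hhigh : Module.finrank ℂ ↥(F.E σ m' ⊔ W) ≤ Module.finrank ℂ ↥W + 1 := by
      have hle : F.E σ m' ⊔ W ≤ F.E σ₀ m₀ := sup_le hFm'le hWle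
      have := Submodule.finrank_mono hle
      rw [h.rank_step, ← hW] at this
      omega
    have h2 : Module.finrank ℂ ↥(F.E σ m' ⊔ W) = Module.finrank ℂ ↥W + 1 :=
      le_antisymm hhigh hlow
    have := hsupinf (F.E σ m')
    rw [h2, ← hinf'] at this
    omega

end Toric
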